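/- arXiv:2006.06915 — 5 statements merged into one kernel-verified Lean document; each statement's English description precedes it below -/
import Mathlib

section
/- Let a, b be nonzero vectors in R^n. Then the trace of the positive part of M = a bᵀ + b aᵀ equals ‖a‖‖b‖(1 + cos θ) and the trace of the negative part equals ‖a‖‖b‖(1 − cos θ), where cos θ = ⟨a,b⟩/(‖a‖‖b‖). -/
/-!
Positive and negative parts of a self-adjoint matrix are unique (`CFC.posPart_negPart_unique`),
so it suffices to exhibit one such decomposition of `M`. The vectors `x = ‖b‖ a` and `y = ‖a‖ b`
have equal length, hence `x + y ⊥ x - y`, and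
`‖a‖ ‖b‖ M = x yᵀ + y xᵀ = ½ (x + y)(x + y)ᵀ - ½ (x - y)(x - y)ᵀ` is such a decomposition, with
traces `½ ‖x ± y‖² = ‖x‖² ± ⟪x, y⟫ = ‖a‖ ‖b‖ (‖a‖ ‖b‖ ± ⟪a, b⟫)`.
-/

open Matrix

noncomputable def vnorm {n : ℕ} (a : Fin n → ℝ) : ℝ := Real.sqrt (∑ i, a i ^ 2)

noncomputable def cosAngle {n : ℕ} (a b : Fin n → ℝ) : ℝ :=
  (∑ i, a i * b i) / (vnorm a * vnorm b)

open scoped MatrixOrder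

lemma sq_vnorm {n : ℕ} (a : Fin n → ℝ) : vnorm a ^ 2 = a ⬝ᵥ a := by
  rw [vnorm, Real.sq_sqrt (by positivity), dotProduct]
  simp_rw [sq]

lemma vnorm_pos {n : ℕ} {a : Fin n → ℝ} (ha : a ≠ 0) : 0 < vnorm a := by
  rw [vnorm, Real.sqrt_pos]
  obtain ⟨i, hi⟩ := Function.ne_iff.mp ha
  exact Finset.sum_pos' (fun j _ ↦ sq_nonneg (a j))
    ⟨i, Finset.mem_univ i, pow_two_pos_of_ne_zero hi⟩

namespace Matrix

variable {n : Type*} [Fintype n]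

lemma posSemidef_vecMulVec_self (x : n → ℝ) : (vecMulVec x x).PosSemidef := by
  simpa using posSemidef_vecMulVec_self_star x

variable [DecidableEq n] {x y : n → ℝ}

lemma posPart_negPart_vecMulVec_add_vecMulVec (h : x ⬝ᵥ x = y ⬝ᵥ y) :
    (vecMulVec x y + vecMulVec y x)⁺ = (2⁻¹ : ℝ) • vecMulVec (x + y) (x + y) ∧
      (vecMulVec x y + vecMulVec y x)⁻ = (2⁻¹ : ℝ) • vecMulVec (x - y) (x - y) := by
  have horth : (x + y) ⬝ᵥ (x - y) = 0 := by
    simp only [add_dotProduct, dotProduct_sub, h, dotProduct_comm x y]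
    ring
  refine CFC.posPart_negPart_unique ?_ ?_
    ((posSemidef_vecMulVec_self _).smul (by norm_num)).nonneg
    ((posSemidef_vecMulVec_self _).smul (by norm_num)).nonneg
  · simp only [add_vecMulVec, vecMulVec_add, sub_vecMulVec, vecMulVec_sub]
    module
  · rw [smul_mul_smul, vecMulVec_mul_vecMulVec, horth, zero_smul, vecMulVec_zero, smul_zero]

lemma trace_posPart_vecMulVec_add_vecMulVec (h : x ⬝ᵥ x = y ⬝ᵥ y) :
    (vecMulVec x y + vecMulVec y x)⁺.trace = x ⬝ᵥ x + x ⬝ᵥ y := by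
  rw [(posPart_negPart_vecMulVec_add_vecMulVec h).1, trace_smul, trace_vecMulVec]
  simp only [add_dotProduct, dotProduct_add, ← h, dotProduct_comm y x, smul_eq_mul]
  ring

lemma trace_negPart_vecMulVec_add_vecMulVec (h : x ⬝ᵥ x = y ⬝ᵥ y) :
    (vecMulVec x y + vecMulVec y x)⁻.trace = x ⬝ᵥ x - x ⬝ᵥ y := by
  rw [(posPart_negPart_vecMulVec_add_vecMulVec h).2, trace_smul, trace_vecMulVec]
  simp only [sub_dotProduct, dotProduct_sub, ← h, dotProduct_comm y x, smul_eq_mul]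
  ring

end Matrix

theorem trace_pos_neg_parts {n : ℕ} (a b : Fin n → ℝ) (ha : a ≠ 0) (hb : b ≠ 0)
    (M Mp Mn : Matrix (Fin n) (Fin n) ℝ)
    (hM : M = Matrix.vecMulVec a b + Matrix.vecMulVec b a)
    (hMp : Mp.PosSemidef) (hMn : Mn.PosSemidef)
    (hsplit : M = Mp - Mn) (horth : Mp * Mn = 0) :
    Mp.trace = vnorm a * vnorm b * (1 + cosAngle a b) ∧
    Mn.trace = vnorm a * vnorm b * (1 - cosAngle a b) := by
  obtain ⟨rfl, rfl⟩ := CFC.posPart_negPart_unique hsplit horth hMp.nonneg hMn.nonneg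
  have hα := vnorm_pos ha
  have hβ := vnorm_pos hb
  set x := vnorm b • a
  set y := vnorm a • b
  have hxx : x ⬝ᵥ x = (vnorm a * vnorm b) ^ 2 := by
    simp only [x, smul_dotProduct, dotProduct_smul, ← sq_vnorm, smul_eq_mul]
    ring
  have hyy : y ⬝ᵥ y = (vnorm a * vnorm b) ^ 2 := by
    simp only [y, smul_dotProduct, dotProduct_smul, ← sq_vnorm, smul_eq_mul]
    ring
  have hxy : x ⬝ᵥ y = vnorm a * vnorm b * (a ⬝ᵥ b) := by
    simp only [x, y, smul_dotProduct, dotProduct_smul, smul_eq_mul]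
    ring
  have hM' : M = (vnorm a * vnorm b)⁻¹ • (vecMulVec x y + vecMulVec y x) := by
    rw [eq_inv_smul_iff₀ (by positivity), hM]
    simp only [x, y, smul_vecMulVec, vecMulVec_smul, smul_smul]
    module
  have hcos : cosAngle a b = a ⬝ᵥ b / (vnorm a * vnorm b) := rfl
  have hnorms : x ⬝ᵥ x = y ⬝ᵥ y := hxx.trans hyy.symm
  rw [hM', CFC.posPart_smul_of_nonneg (by positivity), CFC.negPart_smul_of_nonneg (by positivity),
    trace_smul, trace_smul, trace_posPart_vecMulVec_add_vecMulVec hnorms,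
    trace_negPart_vecMulVec_add_vecMulVec hnorms, hxx, hxy, hcos, smul_eq_mul, smul_eq_mul]
  constructor <;> field_simp
end

section
/- Let M ≠ 0 be a symmetric n×n real matrix with positive/negative part decomposition M = M₊ − M₋ (M₊, M₋ ⪰ 0, M₊M₋ = 0). Then the optimal value of the problem: minimize tr(V) over α ∈ R and symmetric matrices U, V ⪰ 0 subject to tr(U) = 1 and αM = U − V, equals min{ tr(M₋)/tr(M₊), tr(M₊)/tr(M₋) } (with the convention that a ratio with zero denominator is interpreted as the other ratio, i.e., if M ⪰ 0 or M ⪯ 0 the optimum is 0). -/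
/-!
Compress a feasible point `αM = U - V` with the support projection `P` of `M₊`, a spectral
projection with `P M₊ = M₊` and `P M₋ = 0`: then `α tr M₊ = tr (P U) - tr (P V) ≤ tr U = 1`.
Together with the trace identity `α (tr M₊ - tr M₋) = 1 - tr V` this forces
`tr V ≥ tr M₋ / tr M₊` when `tr M₋ ≤ tr M₊`, and `α = 1 / tr M₊`, `U = α M₊`, `V = α M₋`
attains the bound. The case `tr M₊ ≤ tr M₋` is the same after replacing `M` by `-M`.
-/

open Matrix

namespace Matrix

variable {𝕜 ι : Type*} [RCLike 𝕜] [Fintype ι]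

open scoped ComplexOrder

theorem IsHermitian.exists_isIdempotentElem_mul_eq_self_of_mul_eq_zero [DecidableEq ι]
    {A B : Matrix ι ι 𝕜} (hA : A.IsHermitian) (hAB : A * B = 0) :
    ∃ P : Matrix ι ι 𝕜, P.IsHermitian ∧ IsIdempotentElem P ∧ P * A = A ∧ P * B = 0 := by
  have hcont (f : ℝ → ℝ) : ContinuousOn f (spectrum ℝ A) := A.finite_real_spectrum.continuousOn f
  have hsa : IsSelfAdjoint A := hA.isSelfAdjoint
  -- Since `0⁻¹ = 0`, `x⁻¹ * x` is the indicator of `x ≠ 0`.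
  have hP : cfc (fun x : ℝ ↦ x⁻¹) A * A = cfc (fun x : ℝ ↦ x⁻¹ * x) A := by
    rw [cfc_mul _ _ A (hcont _) (hcont _), cfc_id' ℝ A]
  refine ⟨cfc (fun x : ℝ ↦ x⁻¹) A * A, ?_, ?_, ?_, by rw [mul_assoc, hAB, mul_zero]⟩
  · rw [hP]
    exact cfc_predicate _ A
  · rw [IsIdempotentElem, hP, ← cfc_mul _ _ A (hcont _) (hcont _)]
    congr! 2 with x
    rcases eq_or_ne x 0 with rfl | hx <;> simp [*]
  · calc cfc (fun x : ℝ ↦ x⁻¹) A * A * A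
        _ = cfc (fun x : ℝ ↦ x⁻¹ * x) A * cfc (fun x : ℝ ↦ x) A := by rw [cfc_id' ℝ A, hP]
        _ = cfc (fun x : ℝ ↦ x⁻¹ * x * x) A := (cfc_mul _ _ A (hcont _) (hcont _)).symm
        _ = cfc (fun x : ℝ ↦ x) A := by
          congr! 2 with x
          rcases eq_or_ne x 0 with rfl | hx <;> simp [*]
        _ = A := cfc_id' ℝ A

theorem PosSemidef.trace_mul_nonneg_of_isIdempotentElem {P U : Matrix ι ι 𝕜}
    (hP : P.IsHermitian) (hPP : IsIdempotentElem P) (hU : U.PosSemidef) :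
    0 ≤ (P * U).trace := by
  have hconj : (P * U).trace = (P * U * Pᴴ).trace := by
    rw [hP.eq, trace_mul_cycle, hPP.eq]
  rw [hconj]
  exact (hU.mul_mul_conjTranspose_same P).trace_nonneg

theorem PosSemidef.trace_mul_le_trace_of_isIdempotentElem [DecidableEq ι] {P U : Matrix ι ι 𝕜}
    (hP : P.IsHermitian) (hPP : IsIdempotentElem P) (hU : U.PosSemidef) :
    (P * U).trace ≤ U.trace := by
  have := hU.trace_mul_nonneg_of_isIdempotentElem (isHermitian_one.sub hP) hPP.one_sub
  rwa [sub_mul, one_mul, trace_sub, sub_nonneg] at this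

end Matrix

variable {ι : Type*} [Fintype ι]

def feasibleObjectiveValues (M : Matrix ι ι ℝ) : Set ℝ :=
  {t | ∃ (α : ℝ) (U V : Matrix ι ι ℝ),
    U.PosSemidef ∧ V.PosSemidef ∧ U.trace = 1 ∧ α • M = U - V ∧ t = V.trace}

theorem feasibleObjectiveValues_neg (M : Matrix ι ι ℝ) :
    feasibleObjectiveValues (-M) = feasibleObjectiveValues M := by
  ext t
  constructor <;> rintro ⟨α, U, V, hU, hV, hUtr, h, rfl⟩ <;>
    exact ⟨-α, U, V, hU, hV, hUtr, by simpa using h, rfl⟩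

theorem mul_trace_le_trace_of_smul_sub_eq [DecidableEq ι] {A B U V : Matrix ι ι ℝ}
    (hA : A.IsHermitian) (hAB : A * B = 0) (hU : U.PosSemidef) (hV : V.PosSemidef) {α : ℝ}
    (h : α • (A - B) = U - V) : α * A.trace ≤ U.trace := by
  obtain ⟨P, hP, hPP, hPA, hPB⟩ := hA.exists_isIdempotentElem_mul_eq_self_of_mul_eq_zero hAB
  have hcompress : α • A = P * U - P * V := by
    rw [← mul_sub, ← h, mul_smul_comm, mul_sub, hPA, hPB, sub_zero]
  have htrace := congrArg trace hcompress
  rw [trace_smul, trace_sub, smul_eq_mul] at htrace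
  linarith [hV.trace_mul_nonneg_of_isIdempotentElem hP hPP,
    hU.trace_mul_le_trace_of_isIdempotentElem hP hPP]

theorem div_trace_le_of_mem_feasibleObjectiveValues [DecidableEq ι] {A B : Matrix ι ι ℝ}
    (hA : A.IsHermitian) (hB : B.PosSemidef) (hAB : A * B = 0) (hle : B.trace ≤ A.trace)
    {t : ℝ} (ht : t ∈ feasibleObjectiveValues (A - B)) : B.trace / A.trace ≤ t := by
  obtain ⟨α, U, V, hU, hV, hUtr, h, rfl⟩ := ht
  have hαA : α * A.trace ≤ 1 := hUtr ▸ mul_trace_le_trace_of_smul_sub_eq hA hAB hU hV h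
  have htrace := congrArg trace h
  rw [trace_smul, trace_sub, trace_sub, hUtr, smul_eq_mul] at htrace
  rcases (hB.trace_nonneg.trans hle).eq_or_lt with hA0 | hA0
  · simpa [← hA0] using hV.trace_nonneg
  rw [div_le_iff₀ hA0]
  nlinarith [mul_le_mul_of_nonneg_right hαA (sub_nonneg.2 hle)]

theorem div_trace_mem_feasibleObjectiveValues {A B : Matrix ι ι ℝ} (hA : A.PosSemidef)
    (hB : B.PosSemidef) (hA0 : A.trace ≠ 0) :
    B.trace / A.trace ∈ feasibleObjectiveValues (A - B) := by
  have hc : 0 ≤ A.trace⁻¹ := inv_nonneg.2 hA.trace_nonneg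
  refine ⟨A.trace⁻¹, A.trace⁻¹ • A, A.trace⁻¹ • B, hA.smul hc, hB.smul hc, ?_, smul_sub .., ?_⟩
  · rw [trace_smul, smul_eq_mul, inv_mul_cancel₀ hA0]
  · rw [trace_smul, smul_eq_mul, div_eq_inv_mul]

theorem isLeast_feasibleObjectiveValues [DecidableEq ι] {A B : Matrix ι ι ℝ}
    (hA : A.PosSemidef) (hB : B.PosSemidef) (hAB : A * B = 0) (hA0 : A ≠ 0)
    (hle : B.trace ≤ A.trace) :
    IsLeast (feasibleObjectiveValues (A - B)) (B.trace / A.trace) :=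
  ⟨div_trace_mem_feasibleObjectiveValues hA hB (mt hA.trace_eq_zero_iff.1 hA0),
    fun _ ↦ div_trace_le_of_mem_feasibleObjectiveValues hA.1 hB hAB hle⟩

theorem div_le_div_swap_of_le {p q : ℝ} (hq : 0 ≤ q) (hqp : q ≤ p) : q / p ≤ p / q := by
  rcases hq.eq_or_lt with rfl | hq
  · simp
  exact (div_le_one_of_le₀ hqp (hq.le.trans hqp)).trans ((one_le_div hq).2 hqp)

theorem sdp_optimal_value {n : ℕ} (M Mp Mn : Matrix (Fin n) (Fin n) ℝ)
    (hM : M ≠ 0)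
    (hMp : Mp.PosSemidef) (hMn : Mn.PosSemidef)
    (hsplit : M = Mp - Mn) (horth : Mp * Mn = 0) :
    sInf {t : ℝ | ∃ (α : ℝ) (U V : Matrix (Fin n) (Fin n) ℝ),
        U.PosSemidef ∧ V.PosSemidef ∧ U.trace = 1 ∧ α • M = U - V ∧ t = V.trace}
      = min (Mn.trace / Mp.trace) (Mp.trace / Mn.trace) := by
  change sInf (feasibleObjectiveValues M) = _
  wlog hle : Mn.trace ≤ Mp.trace generalizing M Mp Mn
  · have horth' : Mn * Mp = 0 := by
      rw [← hMp.1.eq, ← hMn.1.eq, ← conjTranspose_mul, horth, conjTranspose_zero]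
    rw [← feasibleObjectiveValues_neg, min_comm]
    exact this (-M) Mn Mp (neg_ne_zero.2 hM) hMn hMp (by rw [hsplit, neg_sub]) horth'
      (le_of_not_ge hle)
  have hMp0 : Mp ≠ 0 := by
    rintro rfl
    have hMn0 : Mn = 0 :=
      hMn.trace_eq_zero_iff.1 (le_antisymm (by simpa using hle) hMn.trace_nonneg)
    exact hM (by rw [hsplit, hMn0, sub_zero])
  rw [min_eq_left (div_le_div_swap_of_le hMn.trace_nonneg hle), hsplit]
  exact (isLeast_feasibleObjectiveValues hMp hMn horth hMp0 hle).csInf_eq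
end

section
/- Fix X, Z ∈ R^{n×r} with XXᵀ ≠ ZZᵀ. Define e = vec(XXᵀ − ZZᵀ) and the linear map 𝐗: R^{n×r} → R^{n²} by 𝐗(Y) = vec(XYᵀ + YXᵀ). Then min over Y of ‖e − 𝐗(Y)‖ equals ‖Zᵀ(I − XX†)Z‖_F, where X† is the Moore–Penrose pseudoinverse of X. -/
open Matrix

noncomputable def frob {m n : Type*} [Fintype m] [Fintype n] (A : Matrix m n ℝ) : ℝ :=
  Real.sqrt (∑ i, ∑ j, A i j ^ 2)

/-- The four Moore–Penrose conditions characterizing the pseudoinverse. -/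
def IsMoorePenrose {n r : ℕ} (X : Matrix (Fin n) (Fin r) ℝ)
    (Xd : Matrix (Fin r) (Fin n) ℝ) : Prop :=
  X * Xd * X = X ∧ Xd * X * Xd = Xd ∧ (X * Xd)ᵀ = X * Xd ∧ (Xd * X)ᵀ = Xd * X

namespace MinResAux

/-- sum of squares of entries -/
def sqf {m n : Type*} [Fintype m] [Fintype n] (A : Matrix m n ℝ) : ℝ :=
  ∑ i, ∑ j, A i j ^ 2

lemma frob_eq {m n : Type*} [Fintype m] [Fintype n] (A : Matrix m n ℝ) :
    frob A = Real.sqrt (sqf A) := rfl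

lemma sqf_nonneg {m n : Type*} [Fintype m] [Fintype n] (A : Matrix m n ℝ) : 0 ≤ sqf A :=
  Finset.sum_nonneg fun _ _ => Finset.sum_nonneg fun _ _ => sq_nonneg _

lemma sqf_eq_trace {m n : Type*} [Fintype m] [Fintype n] (A : Matrix m n ℝ) :
    sqf A = Matrix.trace (Aᵀ * A) := by
  simp only [sqf, Matrix.trace, Matrix.diag_apply, Matrix.mul_apply, Matrix.transpose_apply, sq]
  exact Finset.sum_comm

lemma sqf_transpose {m n : Type*} [Fintype m] [Fintype n] (A : Matrix m n ℝ) :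
    sqf Aᵀ = sqf A := by
  simp only [sqf, Matrix.transpose_apply]
  exact Finset.sum_comm

lemma sqf_neg {m n : Type*} [Fintype m] [Fintype n] (A : Matrix m n ℝ) :
    sqf (-A) = sqf A := by
  simp [sqf]

lemma sqf_mul_comm {m n : Type*} [Fintype m] [Fintype n] (A : Matrix m n ℝ) :
    sqf (Aᵀ * A) = sqf (A * Aᵀ) := by
  rw [sqf_eq_trace, sqf_eq_trace, Matrix.transpose_mul, Matrix.transpose_transpose,
    Matrix.transpose_mul, Matrix.transpose_transpose]
  calc Matrix.trace (Aᵀ * A * (Aᵀ * A)) = Matrix.trace ((Aᵀ * A * Aᵀ) * A) := by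
        rw [Matrix.mul_assoc, Matrix.mul_assoc, Matrix.mul_assoc]
    _ = Matrix.trace (A * (Aᵀ * A * Aᵀ)) := Matrix.trace_mul_comm _ _
    _ = Matrix.trace (A * Aᵀ * (A * Aᵀ)) := by rw [Matrix.mul_assoc, Matrix.mul_assoc]

lemma sqf_proj_left {k : ℕ} {m : Type*} [Fintype m] (P : Matrix (Fin k) (Fin k) ℝ)
    (hPt : Pᵀ = P) (hPP : P * P = P) (M : Matrix (Fin k) m ℝ) :
    sqf (P * M) ≤ sqf M := by
  have hdiff : sqf M - sqf (P * M) = sqf ((1 - P) * M) := by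
    rw [sqf_eq_trace M, sqf_eq_trace (P * M), sqf_eq_trace ((1 - P) * M)]
    rw [Matrix.transpose_mul, Matrix.transpose_mul, hPt, Matrix.transpose_sub,
      Matrix.transpose_one, hPt]
    rw [show Mᵀ * P * (P * M) = Mᵀ * (P * M) by
      rw [Matrix.mul_assoc, ← Matrix.mul_assoc P P M, hPP]]
    rw [show Mᵀ * (1 - P) * ((1 - P) * M) = Mᵀ * ((1 - P) * M) by
      rw [Matrix.mul_assoc, ← Matrix.mul_assoc (1 - P) (1 - P) M,
        show (1 - P : Matrix (Fin k) (Fin k) ℝ) * (1 - P) = 1 - P by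
          rw [Matrix.sub_mul, Matrix.mul_sub, Matrix.mul_sub, Matrix.one_mul, Matrix.one_mul, Matrix.mul_one, hPP]
          abel]]
    rw [Matrix.sub_mul, Matrix.one_mul, Matrix.mul_sub, Matrix.trace_sub]
  have := sqf_nonneg ((1 - P) * M)
  linarith

lemma sqf_proj_right {k : ℕ} {m : Type*} [Fintype m] (P : Matrix (Fin k) (Fin k) ℝ)
    (hPt : Pᵀ = P) (hPP : P * P = P) (M : Matrix m (Fin k) ℝ) :
    sqf (M * P) ≤ sqf M := by
  have h := sqf_proj_left P hPt hPP Mᵀ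
  rw [← sqf_transpose (M * P), Matrix.transpose_mul, hPt, ← sqf_transpose M] at *
  exact h

end MinResAux

open MinResAux

theorem min_residual_eq {n r : ℕ} (X Z : Matrix (Fin n) (Fin r) ℝ)
    (hne : X * Xᵀ ≠ Z * Zᵀ)
    (Xd : Matrix (Fin r) (Fin n) ℝ) (hXd : IsMoorePenrose X Xd) :
    IsLeast {t : ℝ | ∃ Y : Matrix (Fin n) (Fin r) ℝ,
        t = frob ((X * Xᵀ - Z * Zᵀ) - (X * Yᵀ + Y * Xᵀ))}
      (frob (Zᵀ * ((1 : Matrix (Fin n) (Fin n) ℝ) - X * Xd) * Z)) := by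
  obtain ⟨h1, h2, h3, h4⟩ := hXd
  set P : Matrix (Fin n) (Fin n) ℝ := X * Xd with hP
  have hPt : Pᵀ = P := h3
  have hPP : P * P = P := by
    nth_rewrite 2 [hP]
    rw [← Matrix.mul_assoc, h1, ← hP]
  set Q : Matrix (Fin n) (Fin n) ℝ := 1 - P with hQ
  have hQt : Qᵀ = Q := by
    rw [hQ, Matrix.transpose_sub, Matrix.transpose_one, hPt]
  have hQQ : Q * Q = Q := by
    rw [hQ, Matrix.sub_mul, Matrix.mul_sub, Matrix.mul_sub, Matrix.one_mul, Matrix.one_mul,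
      Matrix.mul_one, hPP]
    abel
  have hQX : Q * X = 0 := by
    rw [hQ, Matrix.sub_mul, Matrix.one_mul, h1, sub_self]
  have hXtQ : Xᵀ * Q = 0 := by
    have h := congrArg Matrix.transpose hQX
    rwa [Matrix.transpose_mul, hQt, Matrix.transpose_zero] at h
  set E : Matrix (Fin n) (Fin n) ℝ := X * Xᵀ - Z * Zᵀ with hE
  have hEt : Eᵀ = E := by
    rw [hE, Matrix.transpose_sub, Matrix.transpose_mul, Matrix.transpose_transpose,
      Matrix.transpose_mul, Matrix.transpose_transpose]
  have hXdtXt : Xdᵀ * Xᵀ = P := by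
    rw [← Matrix.transpose_mul, ← hP, hPt]
  clear_value E Q P
  have hQE : Q * E * Q = -(Q * (Z * Zᵀ) * Q) := by
    rw [hE, Matrix.mul_sub, Matrix.sub_mul, ← Matrix.mul_assoc Q X Xᵀ, hQX,
      Matrix.zero_mul, Matrix.zero_mul, zero_sub]
  have hZQZ : Zᵀ * Q * Z = (Q * Z)ᵀ * (Q * Z) := by
    rw [Matrix.transpose_mul, hQt, Matrix.mul_assoc Zᵀ Q (Q * Z),
      ← Matrix.mul_assoc Q Q Z, hQQ, ← Matrix.mul_assoc]
  have hQZZQ : Q * (Z * Zᵀ) * Q = (Q * Z) * (Q * Z)ᵀ := by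
    rw [Matrix.transpose_mul, hQt, ← Matrix.mul_assoc (Q * Z) Zᵀ Q,
      ← Matrix.mul_assoc Q Z Zᵀ]
  have hkey : sqf (Zᵀ * Q * Z) = sqf (Q * E * Q) := by
    rw [hZQZ, sqf_mul_comm, ← hQZZQ, hQE, sqf_neg]
  constructor
  · -- membership: exhibit the minimizing Y
    refine ⟨E * Xdᵀ - (1/2 : ℝ) • (P * (E * Xdᵀ)), ?_⟩
    set Y₀ : Matrix (Fin n) (Fin r) ℝ := E * Xdᵀ - (1/2 : ℝ) • (P * (E * Xdᵀ)) with hY₀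
    have hYt : Y₀ᵀ = Xd * E - (1/2 : ℝ) • (Xd * E * P) := by
      rw [hY₀, Matrix.transpose_sub, Matrix.transpose_smul, Matrix.transpose_mul P (E * Xdᵀ),
        Matrix.transpose_mul E Xdᵀ, Matrix.transpose_transpose, hEt, hPt]
    have e1 : X * Y₀ᵀ = P * E - (1/2 : ℝ) • (P * E * P) := by
      rw [hYt, Matrix.mul_sub, Matrix.mul_smul, ← Matrix.mul_assoc X (Xd * E) P,
        ← Matrix.mul_assoc X Xd E, ← hP]
    have e2 : Y₀ * Xᵀ = E * P - (1/2 : ℝ) • (P * E * P) := by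
      rw [hY₀, Matrix.sub_mul, Matrix.smul_mul, Matrix.mul_assoc E Xdᵀ Xᵀ, hXdtXt,
        Matrix.mul_assoc P (E * Xdᵀ) Xᵀ, Matrix.mul_assoc E Xdᵀ Xᵀ, hXdtXt,
        ← Matrix.mul_assoc P E P]
    have e3 : Q * E * Q = E - P * E - E * P + P * E * P := by
      rw [hQ]
      noncomm_ring
    have hresid : E - (X * Y₀ᵀ + Y₀ * Xᵀ) = Q * E * Q := by
      rw [e1, e2, e3]
      module
    rw [frob_eq, frob_eq, hkey, hresid]
  · rintro t ⟨Y, rfl⟩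
    have z1 : Q * (X * Yᵀ) * Q = 0 := by
      rw [← Matrix.mul_assoc Q X Yᵀ, hQX, Matrix.zero_mul, Matrix.zero_mul]
    have z2 : Q * (Y * Xᵀ) * Q = 0 := by
      rw [← Matrix.mul_assoc Q Y Xᵀ, Matrix.mul_assoc (Q * Y) Xᵀ Q, hXtQ, Matrix.mul_zero]
    have hQMQ : Q * (E - (X * Yᵀ + Y * Xᵀ)) * Q = Q * E * Q := by
      rw [Matrix.mul_sub, Matrix.sub_mul, Matrix.mul_add, Matrix.add_mul, z1, z2, add_zero,
        sub_zero]
    have hle : sqf (Q * (E - (X * Yᵀ + Y * Xᵀ)) * Q) ≤ sqf (E - (X * Yᵀ + Y * Xᵀ)) := by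
      calc sqf (Q * (E - (X * Yᵀ + Y * Xᵀ)) * Q)
          = sqf (Q * ((E - (X * Yᵀ + Y * Xᵀ)) * Q)) := by rw [Matrix.mul_assoc]
        _ ≤ sqf ((E - (X * Yᵀ + Y * Xᵀ)) * Q) := sqf_proj_left Q hQt hQQ _
        _ ≤ sqf (E - (X * Yᵀ + Y * Xᵀ)) := sqf_proj_right Q hQt hQQ _
    rw [frob_eq, frob_eq, hkey, ← hQMQ]
    exact Real.sqrt_le_sqrt hle
end

section
/- Fix X, Z ∈ R^{n×r} with XXᵀ ≠ ZZᵀ, and define e = vec(XXᵀ − ZZᵀ) and 𝐗(Y) = vec(XYᵀ + YXᵀ). Then the maximum of ⟨e, 𝐗(y)⟩/(‖e‖·‖𝐗(y)‖) over all y with 𝐗(y) ≠ 0 equals cos θ, where sin θ = ‖Zᵀ(I − XX†)Z‖_F / ‖XXᵀ − ZZᵀ‖_F and θ ∈ [0, π/2]. -/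
open Matrix

/-- Frobenius (trace) inner product of two matrices. -/
def dotF {m n : Type*} [Fintype m] [Fintype n] (A B : Matrix m n ℝ) : ℝ :=
  ∑ i, ∑ j, A i j * B i j

section helpers
variable {m n : Type*} [Fintype m] [Fintype n]

lemma dotF_self (A : Matrix m n ℝ) : dotF A A = ∑ i, ∑ j, A i j ^ 2 := by
  simp [dotF, sq]

lemma dotF_self_nonneg (A : Matrix m n ℝ) : 0 ≤ dotF A A := by
  rw [dotF_self]; positivity

lemma frob_eq (A : Matrix m n ℝ) : frob A = Real.sqrt (dotF A A) := by
  rw [frob, dotF_self]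

lemma frob_nonneg (A : Matrix m n ℝ) : 0 ≤ frob A := Real.sqrt_nonneg _

lemma frob_sq (A : Matrix m n ℝ) : frob A ^ 2 = dotF A A := by
  rw [frob_eq, Real.sq_sqrt (dotF_self_nonneg A)]

lemma frob_pos (A : Matrix m n ℝ) (h : A ≠ 0) : 0 < frob A := by
  rcases (frob_nonneg A).lt_or_eq with h' | h'
  · exact h'
  exfalso; apply h
  have h0 : ∑ i, ∑ j, A i j ^ 2 = 0 := by
    have := h'.symm
    rw [frob] at this
    have hnn : (0:ℝ) ≤ ∑ i, ∑ j, A i j ^ 2 := by positivity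
    nlinarith [Real.sq_sqrt hnn, this]
  ext i j
  have hi := (Finset.sum_eq_zero_iff_of_nonneg (fun i _ => by positivity)).1 h0 i (Finset.mem_univ i)
  have hj := (Finset.sum_eq_zero_iff_of_nonneg (fun j _ => by positivity)).1 hi j (Finset.mem_univ j)
  simpa using pow_eq_zero_iff (n := 2) (by norm_num) |>.1 hj

lemma frob_neg (A : Matrix m n ℝ) : frob (-A) = frob A := by
  simp [frob]

lemma dotF_eq_trace (A B : Matrix m n ℝ) : dotF A B = Matrix.trace (A * Bᵀ) := by
  simp [dotF, Matrix.trace, Matrix.mul_apply, Matrix.diag, Matrix.transpose_apply]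

lemma dotF_le (A B : Matrix m n ℝ) : dotF A B ≤ frob A * frob B := by
  have h := Real.sum_mul_le_sqrt_mul_sqrt Finset.univ
    (fun p : m × n => A p.1 p.2) (fun p : m × n => B p.1 p.2)
  have e1 : ∑ p : m × n, A p.1 p.2 * B p.1 p.2 = ∑ i, ∑ j, A i j * B i j :=
    Fintype.sum_prod_type _
  have e2 : ∑ p : m × n, A p.1 p.2 ^ 2 = ∑ i, ∑ j, A i j ^ 2 := Fintype.sum_prod_type _
  have e3 : ∑ p : m × n, B p.1 p.2 ^ 2 = ∑ i, ∑ j, B i j ^ 2 := Fintype.sum_prod_type _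
  rw [e1, e2, e3] at h
  exact h

lemma dotF_add_left (A B C : Matrix m n ℝ) : dotF (A + B) C = dotF A C + dotF B C := by
  simp [dotF, Matrix.add_apply, add_mul, Finset.sum_add_distrib]

lemma dotF_add_right (A B C : Matrix m n ℝ) : dotF A (B + C) = dotF A B + dotF A C := by
  simp [dotF, Matrix.add_apply, mul_add, Finset.sum_add_distrib]

lemma dotF_comm (A B : Matrix m n ℝ) : dotF A B = dotF B A := by
  simp [dotF, mul_comm]

lemma dotF_zero_left (A : Matrix m n ℝ) : dotF 0 A = 0 := by simp [dotF]

lemma frob_add_self (A : Matrix m n ℝ) : frob (A + A) = 2 * frob A := by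
  have h : ∀ i j : m × n → True, True := fun _ _ => trivial
  have h2 : ∀ i j, (A + A) i j ^ 2 = 4 * A i j ^ 2 := by
    intro i j; simp only [Matrix.add_apply]; ring
  rw [frob, frob]
  simp_rw [h2, ← Finset.mul_sum]
  rw [Real.sqrt_mul (by norm_num),
    show Real.sqrt 4 = 2 by
      rw [show (4:ℝ) = 2^2 by norm_num, Real.sqrt_sq (by norm_num)]]

lemma frob_mul_transpose_comm {p q : Type*} [Fintype p] [Fintype q] (W : Matrix p q ℝ) :
    frob (W * Wᵀ) = frob (Wᵀ * W) := by
  rw [frob_eq, frob_eq]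
  congr 1
  rw [dotF_eq_trace, dotF_eq_trace, Matrix.transpose_mul, Matrix.transpose_transpose,
    Matrix.transpose_mul, Matrix.transpose_transpose]
  calc Matrix.trace (W * Wᵀ * (W * Wᵀ))
      = Matrix.trace (W * (Wᵀ * (W * Wᵀ))) := by rw [Matrix.mul_assoc]
    _ = Matrix.trace ((Wᵀ * (W * Wᵀ)) * W) := Matrix.trace_mul_comm _ _
    _ = Matrix.trace (Wᵀ * W * (Wᵀ * W)) := by simp only [Matrix.mul_assoc]

end helpers

theorem max_cos_incidence {n r : ℕ} (X Z : Matrix (Fin n) (Fin r) ℝ)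
    (hX : X ≠ 0) (hne : X * Xᵀ ≠ Z * Zᵀ)
    (Xd : Matrix (Fin r) (Fin n) ℝ) (hXd : IsMoorePenrose X Xd) :
    ∃ θ ∈ Set.Icc (0 : ℝ) (Real.pi / 2),
      Real.sin θ = frob (Zᵀ * ((1 : Matrix (Fin n) (Fin n) ℝ) - X * Xd) * Z)
          / frob (X * Xᵀ - Z * Zᵀ) ∧
      IsGreatest {c : ℝ | ∃ Y : Matrix (Fin n) (Fin r) ℝ, X * Yᵀ + Y * Xᵀ ≠ 0 ∧
          c = dotF (X * Xᵀ - Z * Zᵀ) (X * Yᵀ + Y * Xᵀ)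
            / (frob (X * Xᵀ - Z * Zᵀ) * frob (X * Yᵀ + Y * Xᵀ))}
        (Real.cos θ) := by
  obtain ⟨h1, h2, h3, h4⟩ := hXd
  set P : Matrix (Fin n) (Fin n) ℝ := X * Xd with hP_def
  set Q : Matrix (Fin n) (Fin n) ℝ := 1 - P with hQ_def
  set E : Matrix (Fin n) (Fin n) ℝ := X * Xᵀ - Z * Zᵀ with hE_def
  set F : Matrix (Fin n) (Fin n) ℝ := Q * E * Q with hF_def
  set G : Matrix (Fin n) (Fin n) ℝ := E - F with hG_def
  clear_value P Q E F G
  -- basic algebraic facts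
  have hPP : P * P = P := by
    nth_rewrite 2 [hP_def]
    rw [← Matrix.mul_assoc, h1, ← hP_def]
  have hQT : Qᵀ = Q := by rw [hQ_def, Matrix.transpose_sub, Matrix.transpose_one, h3]
  have hQQ : Q * Q = Q := by
    rw [hQ_def, Matrix.mul_sub, Matrix.mul_one, Matrix.sub_mul, Matrix.one_mul, hPP]
    abel
  have hQX : Q * X = 0 := by
    rw [hQ_def, Matrix.sub_mul, Matrix.one_mul, h1, sub_self]
  have hET : Eᵀ = E := by
    rw [hE_def]; simp [Matrix.transpose_sub, Matrix.transpose_mul]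
  have hFT : Fᵀ = F := by
    rw [hF_def]; simp [Matrix.transpose_mul, hQT, hET, Matrix.mul_assoc]
  have hGT : Gᵀ = G := by rw [hG_def, Matrix.transpose_sub, hET, hFT]
  have hFX : F * X = 0 := by rw [hF_def, Matrix.mul_assoc, hQX, Matrix.mul_zero]
  have hEne : E ≠ 0 := by rw [hE_def]; exact sub_ne_zero.mpr hne
  have haE : 0 < frob E := frob_pos E hEne
  -- orthogonality of F to the range
  have horth : ∀ Y : Matrix (Fin n) (Fin r) ℝ, dotF F (X * Yᵀ + Y * Xᵀ) = 0 := by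
    intro Y
    have hXtF : Xᵀ * F = 0 := by
      have h6 : (F * X)ᵀ = 0 := by rw [hFX, Matrix.transpose_zero]
      rwa [Matrix.transpose_mul, hFT] at h6
    rw [dotF_eq_trace, Matrix.transpose_add, Matrix.transpose_mul, Matrix.transpose_mul,
      Matrix.transpose_transpose, Matrix.transpose_transpose, Matrix.mul_add, Matrix.trace_add]
    have t1 : F * (X * Yᵀ) = 0 := by rw [← Matrix.mul_assoc, hFX, Matrix.zero_mul]
    have t2 : Matrix.trace (F * (Y * Xᵀ)) = 0 := by
      rw [← Matrix.mul_assoc, Matrix.trace_mul_comm, ← Matrix.mul_assoc, hXtF,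
        Matrix.zero_mul, Matrix.trace_zero]
    rw [t1, t2, Matrix.trace_zero, add_zero]
  -- representation of G (doubled) in the range
  have hQGQ : Q * G * Q = 0 := by
    have key : Q * F * Q = F := by
      rw [hF_def, show Q * (Q * E * Q) * Q = (Q * Q) * E * (Q * Q) from by
        simp only [Matrix.mul_assoc], hQQ]
    rw [hG_def, Matrix.mul_sub, Matrix.sub_mul, key, hF_def, sub_self]
  have h5 : G - (P * G + G * P - P * G * P) = 0 := by
    rw [← hQGQ, hQ_def]
    simp only [Matrix.sub_mul, Matrix.mul_sub, Matrix.one_mul, Matrix.mul_one]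
    abel
  have hPG : P * G + G * P - P * G * P = G := (sub_eq_zero.mp h5).symm
  have hXdT : Xdᵀ * Xᵀ = P := by rw [← Matrix.transpose_mul, ← hP_def, h3]
  set Y0 : Matrix (Fin n) (Fin r) ℝ := (G + G - P * G) * Xdᵀ with hY0_def
  clear_value Y0
  have hY0T : Y0ᵀ = Xd * (G + G - G * P) := by
    rw [hY0_def, Matrix.transpose_mul, Matrix.transpose_transpose, Matrix.transpose_sub,
      Matrix.transpose_add, hGT, Matrix.transpose_mul, hGT, h3]
  have hrep : X * Y0ᵀ + Y0 * Xᵀ = G + G := by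
    rw [hY0T, hY0_def, ← Matrix.mul_assoc X Xd _, ← hP_def,
      Matrix.mul_assoc (G + G - P * G) Xdᵀ Xᵀ, hXdT]
    have h7 : P * (G + G - G * P) + (G + G - P * G) * P
        = (P * G + G * P - P * G * P) + (P * G + G * P - P * G * P) := by
      simp only [Matrix.mul_add, Matrix.add_mul, Matrix.mul_sub, Matrix.sub_mul,
        Matrix.mul_assoc]
      abel
    rw [h7, hPG]
  have hEGF : E = G + F := by rw [hG_def]; abel
  -- Pythagoras
  have hFG0 : dotF F G = 0 := by
    have h0 := horth Y0
    rw [hrep, dotF_add_right] at h0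
    linarith
  have hpy : dotF E E = dotF G G + dotF F F := by
    nth_rewrite 1 [hEGF]
    nth_rewrite 1 [hEGF]
    rw [dotF_add_left, dotF_add_right, dotF_add_right, hFG0, dotF_comm G F, hFG0]
    ring
  have hpy2 : frob E ^ 2 = frob G ^ 2 + frob F ^ 2 := by
    rw [frob_sq, frob_sq, frob_sq]; exact hpy
  -- the sine value
  set W : Matrix (Fin n) (Fin r) ℝ := Q * Z with hW_def
  clear_value W
  have hWT : Wᵀ = Zᵀ * Q := by rw [hW_def, Matrix.transpose_mul, hQT]
  have hZW : Zᵀ * Q * Z = Wᵀ * W := by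
    have h8 : (Zᵀ * Q) * (Q * Z) = Zᵀ * (Q * Q) * Z := by simp only [Matrix.mul_assoc]
    rw [hWT, hW_def, h8, hQQ]
  have hFW : F = -(W * Wᵀ) := by
    have h7 : Q * (X * Xᵀ) * Q = 0 := by
      have h9 : Q * (X * Xᵀ) * Q = (Q * X) * (Xᵀ * Q) := by simp only [Matrix.mul_assoc]
      rw [h9, hQX, Matrix.zero_mul]
    have h8 : F = Q * (X * Xᵀ) * Q - Q * (Z * Zᵀ) * Q := by
      rw [hF_def, hE_def]; simp only [Matrix.mul_sub, Matrix.sub_mul]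
    have h9 : Q * (Z * Zᵀ) * Q = W * Wᵀ := by
      have h10 : (Q * Z) * (Zᵀ * Q) = Q * (Z * Zᵀ) * Q := by simp only [Matrix.mul_assoc]
      rw [hWT, hW_def]; exact h10.symm
    rw [h8, h7, h9, zero_sub]
  have hsin_eq : frob (Zᵀ * Q * Z) = frob F := by
    rw [hZW, ← frob_mul_transpose_comm, show frob (W * Wᵀ) = frob (-(W * Wᵀ)) from
      (frob_neg _).symm, ← hFW]
  -- set up θ
  have hs0 : 0 ≤ frob F / frob E := div_nonneg (frob_nonneg _) haE.le
  have hFle : frob F ≤ frob E := by nlinarith [frob_nonneg F, frob_nonneg G, frob_nonneg E]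
  have hs1 : frob F / frob E ≤ 1 := by rw [div_le_one haE]; exact hFle
  refine ⟨Real.arcsin (frob F / frob E),
    ⟨Real.arcsin_nonneg.2 hs0, Real.arcsin_le_pi_div_two _⟩, ?_, ?_⟩
  · rw [Real.sin_arcsin (by linarith) hs1, hsin_eq]
  · have hcos : Real.cos (Real.arcsin (frob F / frob E)) = frob G / frob E := by
      rw [Real.cos_arcsin]
      have h11 : 1 - (frob F / frob E) ^ 2 = (frob G / frob E) ^ 2 := by
        have ha2 : (frob E) ^ 2 ≠ 0 := by positivity
        have hg2 : (frob G) ^ 2 = (frob E) ^ 2 - (frob F) ^ 2 := by linarith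
        rw [div_pow, div_pow, hg2, sub_div, div_self ha2]
      rw [h11, Real.sqrt_sq (div_nonneg (frob_nonneg _) haE.le)]
    rw [hcos]
    constructor
    · -- membership
      by_cases hG0 : G = 0
      · have hXXT : X * Xᵀ + X * Xᵀ ≠ 0 := by
          intro h0
          have hXX : X * Xᵀ = 0 := by
            ext i j
            have h2 := congrFun (congrFun h0 i) j
            simp only [Matrix.add_apply, Matrix.zero_apply] at h2
            simp only [Matrix.zero_apply]
            linarith
          have hd : dotF X X = 0 := by rw [dotF_eq_trace, hXX, Matrix.trace_zero]
          have hfp := frob_pos X hX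
          rw [frob_eq, hd, Real.sqrt_zero] at hfp
          exact lt_irrefl 0 hfp
        refine ⟨X, hXXT, ?_⟩
        have hEv : dotF E (X * Xᵀ + X * Xᵀ) = 0 := by
          nth_rewrite 1 [hEGF]
          rw [dotF_add_left, hG0, dotF_zero_left, horth X, add_zero]
        rw [hG0, hEv]
        simp [frob]
      · refine ⟨Y0, ?_, ?_⟩
        · rw [hrep]
          intro h0
          apply hG0
          ext i j
          have h2 := congrFun (congrFun h0 i) j
          simp only [Matrix.add_apply, Matrix.zero_apply] at h2
          show G i j = (0 : Matrix (Fin n) (Fin n) ℝ) i j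
          simp only [Matrix.zero_apply]
          linarith
        · rw [hrep]
          have hgpos : 0 < frob G := frob_pos G hG0
          have hEv : dotF E (G + G) = 2 * frob G ^ 2 := by
            nth_rewrite 1 [hEGF]
            rw [dotF_add_left, dotF_add_right, dotF_add_right, hFG0, frob_sq]
            ring
          rw [hEv, frob_add_self]
          field_simp
    · -- upper bound
      rintro c ⟨Y, hv, rfl⟩
      have hvpos : 0 < frob (X * Yᵀ + Y * Xᵀ) := frob_pos _ hv
      have hEv : dotF E (X * Yᵀ + Y * Xᵀ) = dotF G (X * Yᵀ + Y * Xᵀ) := by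
        nth_rewrite 1 [hEGF]
        rw [dotF_add_left, horth Y, add_zero]
      rw [hEv, div_le_div_iff₀ (by positivity) haE]
      have hcs := dotF_le G (X * Yᵀ + Y * Xᵀ)
      calc dotF G (X * Yᵀ + Y * Xᵀ) * frob E
          ≤ (frob G * frob (X * Yᵀ + Y * Xᵀ)) * frob E :=
            mul_le_mul_of_nonneg_right hcs haE.le
        _ = frob G * (frob E * frob (X * Yᵀ + Y * Xᵀ)) := by ring
end

section
/- Let Z ∈ R^{n×r} with σ_min(Z) > 0, let C = ‖ZZᵀ‖_F/σ_min²(Z), and let ε satisfy 0 < ε < 1/C. Then for every X ∈ R^{n×r} with XXᵀ ≠ ZZᵀ and ‖XXᵀ − ZZᵀ‖_F ≤ ε‖ZZᵀ‖_F, one has cos θ(X) ≥ √(1 − Cε), where sin θ(X) = ‖Zᵀ(I − XX†)Z‖_F / ‖XXᵀ − ZZᵀ‖_F and θ(X) ∈ [0, π/2]. -/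
open Matrix

/-- The square of the smallest singular value: the minimum of `‖Z v‖²` over unit vectors `v`. -/
noncomputable def sminSq {m : Type*} [Fintype m] {r : ℕ} (Z : Matrix m (Fin r) ℝ) : ℝ :=
  sInf {t : ℝ | ∃ v : Fin r → ℝ, (∑ i, v i ^ 2) = 1 ∧ t = ∑ i, (Z.mulVec v) i ^ 2}

noncomputable def frobSq {m n : Type*} [Fintype m] [Fintype n] (A : Matrix m n ℝ) : ℝ :=
  ∑ i, ∑ j, A i j ^ 2

lemma frobSq_nonneg {m n : Type*} [Fintype m] [Fintype n] (A : Matrix m n ℝ) :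
    0 ≤ frobSq A := by
  unfold frobSq; positivity

lemma frobSq_eq_trace {m n : Type*} [Fintype m] [Fintype n] (A : Matrix m n ℝ) :
    frobSq A = (Aᵀ * A).trace := by
  simp only [frobSq, Matrix.trace, Matrix.diag, Matrix.mul_apply, Matrix.transpose_apply, sq]
  exact Finset.sum_comm

lemma frobSq_neg {m n : Type*} [Fintype m] [Fintype n] (A : Matrix m n ℝ) :
    frobSq (-A) = frobSq A := by
  simp [frobSq]

-- L2
lemma frobSq_transpose_mul {m n : Type*} [Fintype m] [Fintype n] (A : Matrix m n ℝ) :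
    frobSq (Aᵀ * A) = frobSq (A * Aᵀ) := by
  rw [frobSq_eq_trace, frobSq_eq_trace]
  simp only [Matrix.transpose_mul, Matrix.transpose_transpose]
  calc (Aᵀ * A * (Aᵀ * A)).trace = ((Aᵀ * (A * Aᵀ)) * A).trace := by
        simp [Matrix.mul_assoc]
    _ = (A * (Aᵀ * (A * Aᵀ))).trace := Matrix.trace_mul_comm _ _
    _ = (A * Aᵀ * (A * Aᵀ)).trace := by simp [Matrix.mul_assoc]

-- L1
lemma frobSq_transpose_mul_le {m n : Type*} [Fintype m] [Fintype n] (A : Matrix m n ℝ) :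
    frobSq (Aᵀ * A) ≤ frobSq A ^ 2 := by
  have h : ∀ i j : n, (Aᵀ * A) i j ^ 2 ≤ (∑ k, A k i ^ 2) * (∑ k, A k j ^ 2) := by
    intro i j
    simpa [Matrix.mul_apply] using Finset.sum_mul_sq_le_sq_mul_sq Finset.univ (fun k => A k i) (fun k => A k j)
  have : frobSq (Aᵀ * A) ≤ ∑ i, ∑ j, (∑ k, A k i ^ 2) * (∑ k : m, A k j ^ 2) := by
    apply Finset.sum_le_sum; intro i _
    exact Finset.sum_le_sum fun j _ => h i j
  refine this.trans_eq ?_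
  rw [← Finset.sum_mul_sum]
  have hA : frobSq A = ∑ i : n, ∑ k : m, A k i ^ 2 := Finset.sum_comm
  rw [hA, sq]

-- L3: sminSq lower bound for all vectors
lemma sminSq_le {m : Type*} [Fintype m] {r : ℕ} (Z : Matrix m (Fin r) ℝ)
    (v : Fin r → ℝ) :
    sminSq Z * (∑ i, v i ^ 2) ≤ ∑ i, (Z.mulVec v) i ^ 2 := by
  have hbdd : BddBelow {t : ℝ | ∃ v : Fin r → ℝ, (∑ i, v i ^ 2) = 1 ∧ t = ∑ i, (Z.mulVec v) i ^ 2} := by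
    refine ⟨0, fun t ht => ?_⟩
    obtain ⟨w, -, rfl⟩ := ht
    positivity
  rcases eq_or_lt_of_le (by positivity : (0:ℝ) ≤ ∑ i, v i ^ 2) with h0 | hpos
  · have hv : ∀ i, v i = 0 := by
      intro i
      have := (Finset.sum_eq_zero_iff_of_nonneg (fun i _ => by positivity)).mp h0.symm i (Finset.mem_univ i)
      exact pow_eq_zero_iff (two_ne_zero) |>.mp this
    have hv0 : v = 0 := funext hv
    simp [hv0, ← h0, Matrix.mulVec_zero]
  · set c : ℝ := ∑ i, v i ^ 2 with hc
    have hsc : Real.sqrt c > 0 := Real.sqrt_pos.mpr hpos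
    set w : Fin r → ℝ := (Real.sqrt c)⁻¹ • v with hw
    have hw1 : (∑ i, w i ^ 2) = 1 := by
      simp only [hw, Pi.smul_apply, smul_eq_mul, mul_pow, ← Finset.mul_sum]
      rw [← hc]
      rw [← Real.sqrt_inv, Real.sq_sqrt (by positivity)]
      field_simp
    have hmem : (∑ i, (Z.mulVec w) i ^ 2) ∈ {t : ℝ | ∃ v : Fin r → ℝ, (∑ i, v i ^ 2) = 1 ∧ t = ∑ i, (Z.mulVec v) i ^ 2} :=
      ⟨w, hw1, rfl⟩
    have hle : sminSq Z ≤ ∑ i, (Z.mulVec w) i ^ 2 := csInf_le hbdd hmem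
    have hval : (∑ i, (Z.mulVec w) i ^ 2) = c⁻¹ * ∑ i, (Z.mulVec v) i ^ 2 := by
      simp only [hw, Matrix.mulVec_smul, Pi.smul_apply, smul_eq_mul, mul_pow, ← Finset.mul_sum]
      congr 1
      rw [← Real.sqrt_inv, Real.sq_sqrt (by positivity)]
    rw [hval] at hle
    calc sminSq Z * c ≤ (c⁻¹ * ∑ i, (Z.mulVec v) i ^ 2) * c := by
          exact mul_le_mul_of_nonneg_right hle hpos.le
      _ = ∑ i, (Z.mulVec v) i ^ 2 := by field_simp

-- L4: sminSq Z * frobSq A ≤ frobSq (A * Zᵀ)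
lemma smin_frobSq_le {m : Type*} [Fintype m] {r n : ℕ}
    (Z : Matrix m (Fin r) ℝ) (A : Matrix (Fin n) (Fin r) ℝ) :
    sminSq Z * frobSq A ≤ frobSq (A * Zᵀ) := by
  have key : ∀ i : Fin n, sminSq Z * (∑ k, A i k ^ 2) ≤ ∑ j, (A * Zᵀ) i j ^ 2 := by
    intro i
    have h := sminSq_le Z (fun k => A i k)
    refine h.trans_eq ?_
    apply Finset.sum_congr rfl
    intro j _
    congr 1
    simp [Matrix.mul_apply, Matrix.mulVec, dotProduct, mul_comm]
  calc sminSq Z * frobSq A = ∑ i, sminSq Z * (∑ k, A i k ^ 2) := by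
        rw [frobSq, Finset.mul_sum]
    _ ≤ ∑ i, ∑ j, (A * Zᵀ) i j ^ 2 := Finset.sum_le_sum fun i _ => key i
    _ = frobSq (A * Zᵀ) := rfl

-- L5: orthogonal projection contracts Frobenius norm
lemma proj_contract {n : ℕ} {m : Type*} [Fintype m] (Q : Matrix (Fin n) (Fin n) ℝ)
    (hQs : Qᵀ = Q) (hQi : Q * Q = Q) (A : Matrix (Fin n) m ℝ) :
    frobSq ((1 - Q) * A) ≤ frobSq A := by
  have hPs : (1 - Q)ᵀ = 1 - Q := by
    rw [Matrix.transpose_sub, Matrix.transpose_one, hQs]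
  have hPi : (1 - Q) * (1 - Q) = 1 - Q := by
    rw [sub_mul, one_mul, mul_sub, mul_one, hQi]
    abel
  have e1 : frobSq ((1 - Q) * A) = (Aᵀ * ((1 - Q) * A)).trace := by
    rw [frobSq_eq_trace, Matrix.transpose_mul, hPs]
    congr 1
    rw [Matrix.mul_assoc, ← Matrix.mul_assoc (1 - Q), hPi]
  have e2 : frobSq (Q * A) = (Aᵀ * (Q * A)).trace := by
    rw [frobSq_eq_trace, Matrix.transpose_mul, hQs]
    congr 1
    rw [Matrix.mul_assoc, ← Matrix.mul_assoc Q, hQi]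
  have e3 : frobSq A = frobSq ((1 - Q) * A) + frobSq (Q * A) := by
    rw [e1, e2, frobSq_eq_trace, ← Matrix.trace_add, ← Matrix.mul_add,
      Matrix.sub_mul, Matrix.one_mul, sub_add_cancel]
  have := frobSq_nonneg (Q * A)
  linarith

lemma frobSq_pos {m n : Type*} [Fintype m] [Fintype n] {A : Matrix m n ℝ}
    (hA : A ≠ 0) : 0 < frobSq A := by
  by_contra h
  push_neg at h
  apply hA
  ext i j
  have hz : ∑ i, ∑ j, A i j ^ 2 = 0 := le_antisymm h (frobSq_nonneg A)
  have h1 := (Finset.sum_eq_zero_iff_of_nonneg (fun i _ => by positivity)).mp hz i (Finset.mem_univ i)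
  have h2 := (Finset.sum_eq_zero_iff_of_nonneg (fun j _ => by positivity)).mp h1 j (Finset.mem_univ j)
  simpa using pow_eq_zero_iff two_ne_zero |>.mp h2

lemma frob_eq_sqrt_frobSq {m n : Type*} [Fintype m] [Fintype n] (A : Matrix m n ℝ) :
    frob A = Real.sqrt (frobSq A) := rfl

set_option maxHeartbeats 1000000 in
theorem cos_theta_lower_bound {n r : ℕ} (Z : Matrix (Fin n) (Fin r) ℝ)
    (hZ : 0 < sminSq Z) (C : ℝ) (hC : C = frob (Z * Zᵀ) / sminSq Z)
    (ε : ℝ) (hε0 : 0 < ε) (hε1 : ε < 1 / C) :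
    ∀ X : Matrix (Fin n) (Fin r) ℝ, X * Xᵀ ≠ Z * Zᵀ →
      frob (X * Xᵀ - Z * Zᵀ) ≤ ε * frob (Z * Zᵀ) →
      ∀ Xd : Matrix (Fin r) (Fin n) ℝ, IsMoorePenrose X Xd →
      ∀ θ ∈ Set.Icc (0 : ℝ) (Real.pi / 2),
        Real.sin θ = frob (Zᵀ * ((1 : Matrix (Fin n) (Fin n) ℝ) - X * Xd) * Z)
            / frob (X * Xᵀ - Z * Zᵀ) →
        Real.cos θ ≥ Real.sqrt (1 - C * ε) := by
  intro X hne hXE Xd hMP θ hθ hsin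
  obtain ⟨hθ0, hθ2⟩ := hθ
  obtain ⟨h1, h2, h3, h4⟩ := hMP
  set s := sminSq Z with hs
  set Q : Matrix (Fin n) (Fin n) ℝ := X * Xd with hQ
  set P : Matrix (Fin n) (Fin n) ℝ := (1 : Matrix (Fin n) (Fin n) ℝ) - Q with hP
  set E : Matrix (Fin n) (Fin n) ℝ := X * Xᵀ - Z * Zᵀ with hE
  have hQs : Qᵀ = Q := h3
  have hQi : Q * Q = Q := by rw [hQ, ← Matrix.mul_assoc, h1]
  have hPs : Pᵀ = P := by rw [hP, Matrix.transpose_sub, Matrix.transpose_one, hQs]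
  have hPP : P * P = P := by
    rw [hP, Matrix.sub_mul, Matrix.one_mul, Matrix.mul_sub, Matrix.mul_one, hQi]
    abel
  have hPX : P * (X * Xᵀ) = 0 := by
    rw [hP, Matrix.sub_mul, Matrix.one_mul, hQ, Matrix.mul_assoc, ← Matrix.mul_assoc X Xd,
      ← Matrix.mul_assoc, h1, sub_self]
  have hPE : P * E = -(P * (Z * Zᵀ)) := by
    rw [hE, Matrix.mul_sub, hPX, zero_sub]
  set A : Matrix (Fin n) (Fin r) ℝ := P * Z with hA
  have hAtA : Aᵀ * A = Zᵀ * P * Z := by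
    rw [hA, Matrix.transpose_mul, hPs, Matrix.mul_assoc, ← Matrix.mul_assoc P P Z, hPP,
      ← Matrix.mul_assoc]
  have hAZt : A * Zᵀ = -(P * E) := by
    rw [hA, Matrix.mul_assoc, hPE, neg_neg]
  -- norms
  have hEne : E ≠ 0 := sub_ne_zero.mpr hne
  have hE2pos : 0 < frobSq E := frobSq_pos hEne
  set D : ℝ := frob E with hD
  have hDpos : 0 < D := Real.sqrt_pos.mpr hE2pos
  have hD2 : D ^ 2 = frobSq E := Real.sq_sqrt (frobSq_nonneg E)
  -- chain of inequalities
  have step2 : s * frobSq A ≤ frobSq E := by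
    calc s * frobSq A ≤ frobSq (A * Zᵀ) := smin_frobSq_le Z A
      _ = frobSq (P * E) := by rw [hAZt, frobSq_neg]
      _ ≤ frobSq E := proj_contract Q hQs hQi E
  have hAle : frobSq A ≤ frobSq E / s := by
    rw [le_div_iff₀ hZ]
    linarith [step2]
  have hN2le : frobSq (Zᵀ * P * Z) ≤ (frobSq E / s) ^ 2 := by
    calc frobSq (Zᵀ * P * Z) = frobSq (Aᵀ * A) := by rw [hAtA]
      _ ≤ frobSq A ^ 2 := frobSq_transpose_mul_le A
      _ ≤ (frobSq E / s) ^ 2 := pow_le_pow_left₀ (frobSq_nonneg A) hAle 2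
  have hNle : frob (Zᵀ * P * Z) ≤ frobSq E / s := by
    rw [frob_eq_sqrt_frobSq]
    have h0 : (0:ℝ) ≤ frobSq E / s := by positivity
    calc Real.sqrt (frobSq (Zᵀ * P * Z)) ≤ Real.sqrt ((frobSq E / s) ^ 2) :=
          Real.sqrt_le_sqrt hN2le
      _ = frobSq E / s := Real.sqrt_sq h0
  have hCpos : 0 < C := one_div_pos.mp (lt_trans hε0 hε1)
  have hCε1 : C * ε ≤ 1 := by
    have := (lt_div_iff₀ hCpos).mp hε1
    nlinarith
  have hsin' : Real.sin θ ≤ C * ε := by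
    rw [hsin]
    have e1 : frob (Zᵀ * P * Z) / D ≤ (frobSq E / s) / D :=
      (div_le_div_iff_of_pos_right hDpos).mpr hNle
    have e2 : (frobSq E / s) / D = D / s := by
      rw [← hD2]; field_simp
    have e3 : D / s ≤ (ε * frob (Z * Zᵀ)) / s := (div_le_div_iff_of_pos_right hZ).mpr hXE
    have e4 : (ε * frob (Z * Zᵀ)) / s = C * ε := by rw [hC]; ring
    calc frob (Zᵀ * P * Z) / D ≤ (frobSq E / s) / D := e1
      _ = D / s := e2
      _ ≤ (ε * frob (Z * Zᵀ)) / s := e3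
      _ = C * ε := e4
  have hsin_nonneg : 0 ≤ Real.sin θ :=
    Real.sin_nonneg_of_nonneg_of_le_pi hθ0 (by linarith [Real.pi_pos])
  have hsinsq : Real.sin θ ^ 2 ≤ C * ε := by nlinarith
  have hcos_nonneg : 0 ≤ Real.cos θ :=
    Real.cos_nonneg_of_mem_Icc ⟨by linarith [Real.pi_pos], hθ2⟩
  have hcs : Real.cos θ ^ 2 = 1 - Real.sin θ ^ 2 := Real.cos_sq' θ
  calc Real.sqrt (1 - C * ε) ≤ Real.sqrt (Real.cos θ ^ 2) :=
        Real.sqrt_le_sqrt (by nlinarith)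
    _ = Real.cos θ := Real.sqrt_sq hcos_nonneg
end
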